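/- Let K̂ be the closed unit triangle with vertices a₁ = (0,0), a₂ = (1,0), a₃ = (0,1), edges e₁ (from a₂ to a₃), e₂ (from a₃ to a₁), e₃ (from a₁ to a₂), each with a fixed unit tangent vector τᵢ. Let S = [P₂]² ⊕ span{𝔭B} with B(x₁,x₂) = x₁x₂(1−x₁−x₂), a 13-dimensional space of polynomial vector fields on ℝ². Suppose u ∈ S satisfies the 13 conditions: (∇×u)(aᵢ) = 0 for i = 1,2,3; ∫_{eᵢ} (u·τᵢ)·q dH¹ = 0 for every polynomial q of total degree at most 2 and each i = 1,2,3; and ∫_{K̂} u(x)·x dx = 0, where x = (x₁,x₂). Then u = 0. That is, the degrees of freedom of the lowest-order curl-curl conforming element are unisolvent on S. -/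

import Mathlib

open MeasureTheory MvPolynomial

/-- Evaluation of a two-variable polynomial at a point of `ℝ²`. -/
noncomputable def evalP (p : MvPolynomial (Fin 2) ℝ) (x : ℝ × ℝ) : ℝ :=
  MvPolynomial.eval ![x.1, x.2] p

/-- The polynomial `x₁x₂(1/4 − (x₁+x₂)/5)`. -/
noncomputable def bubbleFactor : MvPolynomial (Fin 2) ℝ :=
  X 0 * X 1 * (C (1/4 : ℝ) - (X 0 + X 1) * C (1/5 : ℝ))

/-- The pair of polynomials representing `𝔭B`, namely `(-x₂, x₁) · x₁x₂(1/4 − (x₁+x₂)/5)`. -/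
noncomputable def pB : MvPolynomial (Fin 2) ℝ × MvPolynomial (Fin 2) ℝ :=
  (-(X 1) * bubbleFactor, X 0 * bubbleFactor)

/-- The space `[P₂]²` of pairs of polynomials of total degree at most 2. -/
noncomputable def P2sq : Submodule ℝ (MvPolynomial (Fin 2) ℝ × MvPolynomial (Fin 2) ℝ) :=
  (restrictTotalDegree (Fin 2) ℝ 2).prod (restrictTotalDegree (Fin 2) ℝ 2)

/-- The shape function space `S = [P₂]² ⊕ span{𝔭B}` of the lowest-order
curl-curl conforming element. -/
noncomputable def shapeSpace : Submodule ℝ (MvPolynomial (Fin 2) ℝ × MvPolynomial (Fin 2) ℝ) :=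
  P2sq ⊔ Submodule.span ℝ {pB}

/-- The scalar curl `∂u₂/∂x₁ − ∂u₁/∂x₂` of a polynomial vector field. -/
noncomputable def curlPoly (u : MvPolynomial (Fin 2) ℝ × MvPolynomial (Fin 2) ℝ) :
    MvPolynomial (Fin 2) ℝ :=
  pderiv 0 u.2 - pderiv 1 u.1

/-- The closed unit triangle with vertices `(0,0)`, `(1,0)`, `(0,1)`. -/
def closedUnitTriangle : Set (ℝ × ℝ) := {x | 0 ≤ x.1 ∧ 0 ≤ x.2 ∧ x.1 + x.2 ≤ 1}

@[fun_prop]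
lemma continuous_evalP (p : MvPolynomial (Fin 2) ℝ) : Continuous (evalP p) := by
  unfold evalP
  refine p.continuous_eval.comp (continuous_pi fun i => ?_)
  fin_cases i <;> simp <;> fun_prop

lemma seg_int (a1 a2 b1 b2 : ℝ) (hab : max |b1 - a1| |b2 - a2| = 1)
    (g : ℝ × ℝ → ℝ) :
    (∫ x in segment ℝ (a1, a2) (b1, b2), g x ∂(μH[1])) =
      ∫ t in (0:ℝ)..1, g ((1-t)*a1 + t*b1, (1-t)*a2 + t*b2) := by
  set f : ℝ → ℝ × ℝ := fun t => ((1-t)*a1 + t*b1, (1-t)*a2 + t*b2) with hf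
  have hiso : Isometry f := by
    refine Isometry.of_dist_eq fun s t => ?_
    simp only [hf, Prod.dist_eq, Real.dist_eq]
    have h1 : |(1-s)*a1 + s*b1 - ((1-t)*a1 + t*b1)| = |s - t| * |b1 - a1| := by
      rw [← abs_mul]; ring_nf
    have h2 : |(1-s)*a2 + s*b2 - ((1-t)*a2 + t*b2)| = |s - t| * |b2 - a2| := by
      rw [← abs_mul]; ring_nf
    rw [h1, h2, ← mul_max_of_nonneg _ _ (abs_nonneg _), hab, mul_one]
  have hemb : MeasurableEmbedding f :=
    hiso.isClosedEmbedding.measurableEmbedding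
  have hseg : segment ℝ (a1, a2) (b1, b2) = f '' Set.Icc (0:ℝ) 1 := by
    rw [segment_eq_image]
    refine Set.image_congr fun t _ => ?_
    simp [hf, Prod.ext_iff, Prod.smul_def, smul_eq_mul]
  have hmap : (μH[1] : Measure (ℝ × ℝ)).restrict (f '' Set.Icc (0:ℝ) 1) =
      Measure.map f (volume.restrict (Set.Icc (0:ℝ) 1)) := by
    have h1 : Set.Icc (0:ℝ) 1 = f ⁻¹' (f '' Set.Icc 0 1) :=
      (hemb.injective.preimage_image _).symm
    rw [← hausdorffMeasure_real]
    conv_rhs => rw [h1, ← hemb.restrict_map]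
    rw [hiso.map_hausdorffMeasure (Or.inl zero_le_one),
      Measure.restrict_restrict_of_subset (Set.image_subset_range _ _)]
  rw [hseg, hmap, hemb.integral_map]
  rw [MeasureTheory.integral_Icc_eq_integral_Ioc, ← intervalIntegral.integral_of_le zero_le_one]

lemma poly_int_ub (b p0 p1 p2 p3 p4 : ℝ) :
    (∫ t in (0:ℝ)..b, (p0 + p1*t + p2*t^2 + p3*t^3 + p4*t^4)) =
      p0*b + p1*b^2/2 + p2*b^3/3 + p3*b^4/4 + p4*b^5/5 := by
  have key : ∀ t ∈ Set.uIcc (0:ℝ) b,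
      HasDerivAt (fun t => p0*t + p1*t^2/2 + p2*t^3/3 + p3*t^4/4 + p4*t^5/5)
        (p0 + p1*t + p2*t^2 + p3*t^3 + p4*t^4) t := by
    intro t _
    have h := (((((hasDerivAt_id t).const_mul p0).add
      (((hasDerivAt_pow 2 t).const_mul (p1/2)))).add
      (((hasDerivAt_pow 3 t).const_mul (p2/3)))).add
      (((hasDerivAt_pow 4 t).const_mul (p3/4)))).add
      (((hasDerivAt_pow 5 t).const_mul (p4/5)))
    refine (h.congr_deriv ?_).congr_of_eventuallyEq (Filter.Eventually.of_forall fun x => ?_)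
    · push_cast; ring
    · simp only [Pi.add_apply, id]; ring
  rw [intervalIntegral.integral_eq_sub_of_hasDerivAt key ((by fun_prop : Continuous _).intervalIntegrable _ _)]
  ring

lemma poly_int (p0 p1 p2 p3 p4 p5 : ℝ) :
    (∫ t in (0:ℝ)..1, (p0 + p1*t + p2*t^2 + p3*t^3 + p4*t^4 + p5*t^5)) =
      p0 + p1/2 + p2/3 + p3/4 + p4/5 + p5/6 := by
  have key : ∀ t ∈ Set.uIcc (0:ℝ) 1,
      HasDerivAt (fun t => p0*t + p1*t^2/2 + p2*t^3/3 + p3*t^4/4 + p4*t^5/5 + p5*t^6/6)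
        (p0 + p1*t + p2*t^2 + p3*t^3 + p4*t^4 + p5*t^5) t := by
    intro t _
    have h := ((((((hasDerivAt_id t).const_mul p0).add
      (((hasDerivAt_pow 2 t).const_mul (p1/2)))).add
      (((hasDerivAt_pow 3 t).const_mul (p2/3)))).add
      (((hasDerivAt_pow 4 t).const_mul (p3/4)))).add
      (((hasDerivAt_pow 5 t).const_mul (p4/5)))).add
      (((hasDerivAt_pow 6 t).const_mul (p5/6)))
    refine (h.congr_deriv ?_).congr_of_eventuallyEq (Filter.Eventually.of_forall fun x => ?_)
    · push_cast; ring
    · simp only [Pi.add_apply, id]; ring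
  rw [intervalIntegral.integral_eq_sub_of_hasDerivAt key ((by fun_prop : Continuous _).intervalIntegrable _ _)]
  ring

lemma triangle_closed : IsClosed closedUnitTriangle := by
  unfold closedUnitTriangle
  exact IsClosed.inter (isClosed_le continuous_const continuous_fst)
    (IsClosed.inter (isClosed_le continuous_const continuous_snd)
      (isClosed_le (continuous_fst.add continuous_snd) continuous_const))

lemma triangle_compact : IsCompact closedUnitTriangle := by
  refine IsCompact.of_isClosed_subset (isCompact_Icc (a := ((0:ℝ),(0:ℝ))) (b := (1,1)))
    triangle_closed ?_
  rintro ⟨x, y⟩ ⟨h1, h2, h3⟩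
  constructor <;> constructor <;> simp_all <;> linarith

lemma triangle_int (g : ℝ × ℝ → ℝ) (hg : Continuous g) :
    (∫ x in closedUnitTriangle, g x) =
      ∫ x in (0:ℝ)..1, ∫ y in (0:ℝ)..(1-x), g (x, y) := by
  have hTm : MeasurableSet closedUnitTriangle := triangle_closed.measurableSet
  have hInt : Integrable (closedUnitTriangle.indicator g) :=
    (hg.continuousOn.integrableOn_compact triangle_compact).integrable_indicator hTm
  rw [← integral_indicator hTm]
  rw [MeasureTheory.Measure.volume_eq_prod] at hInt ⊢
  rw [MeasureTheory.integral_prod _ hInt]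
  have inner : ∀ x : ℝ, (∫ y, closedUnitTriangle.indicator g (x, y)) =
      (Set.Icc (0:ℝ) 1).indicator (fun x => ∫ y in (0:ℝ)..(1-x), g (x, y)) x := by
    intro x
    by_cases hx : x ∈ Set.Icc (0:ℝ) 1
    · obtain ⟨hx0, hx1⟩ := hx
      have hfun : (fun y => closedUnitTriangle.indicator g (x, y)) =
          (Set.Icc (0:ℝ) (1-x)).indicator (fun y => g (x, y)) := by
        funext y
        by_cases hy : y ∈ Set.Icc (0:ℝ) (1-x)
        · rw [Set.indicator_of_mem hy,
            Set.indicator_of_mem (by exact ⟨hx0, hy.1, by linarith [hy.2]⟩)]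
        · rw [Set.indicator_of_notMem hy, Set.indicator_of_notMem (by
            rintro ⟨-, h2, h3⟩; exact hy ⟨h2, by linarith⟩)]
      rw [hfun, integral_indicator measurableSet_Icc,
        Set.indicator_of_mem (Set.mem_Icc.mpr ⟨hx0, hx1⟩),
        MeasureTheory.integral_Icc_eq_integral_Ioc,
        ← intervalIntegral.integral_of_le (by linarith)]
    · have hfun : (fun y => closedUnitTriangle.indicator g (x, y)) = fun _ => (0:ℝ) := by
        funext y
        refine Set.indicator_of_notMem ?_ _
        rintro ⟨h1, h2, h3⟩
        simp only [Set.mem_Icc, not_and_or, not_le] at hx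
        rcases hx with h | h
        · exact absurd h1 (not_le.mpr h)
        · simp only at h1 h2 h3; linarith
      rw [hfun, Set.indicator_of_notMem hx]
      simp
  rw [show (fun x => ∫ y, closedUnitTriangle.indicator g (x, y)) =
      (Set.Icc (0:ℝ) 1).indicator (fun x => ∫ y in (0:ℝ)..(1-x), g (x, y)) from funext inner,
    integral_indicator measurableSet_Icc,
    MeasureTheory.integral_Icc_eq_integral_Ioc,
    ← intervalIntegral.integral_of_le zero_le_one]

lemma P2_rep (p : MvPolynomial (Fin 2) ℝ) (hp : p.totalDegree ≤ 2) :
    ∃ a0 a1 a2 a3 a4 a5 : ℝ,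
      p = C a0 + C a1 * X 0 + C a2 * X 1 + C a3 * X 0 ^ 2 + C a4 * (X 0 * X 1)
        + C a5 * X 1 ^ 2 := by
  set v6 : Fin 6 → MvPolynomial (Fin 2) ℝ :=
    ![1, X 0, X 1, X 0 ^ 2, X 0 * X 1, X 1 ^ 2] with hv6
  have key : ∀ i j : ℕ, i + j ≤ 2 →
      (X 0 ^ i * X 1 ^ j : MvPolynomial (Fin 2) ℝ) ∈ Submodule.span ℝ (Set.range v6) := by
    intro i j hij
    have hi : i ≤ 2 := by omega
    have hj : j ≤ 2 := by omega
    interval_cases i <;> interval_cases j <;>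
      (try simp only [pow_zero, pow_one, one_mul, mul_one]) <;>
      first
        | exact absurd hij (by omega)
        | exact Submodule.subset_span ⟨0, rfl⟩
        | exact Submodule.subset_span ⟨1, rfl⟩
        | exact Submodule.subset_span ⟨2, rfl⟩
        | exact Submodule.subset_span ⟨3, rfl⟩
        | exact Submodule.subset_span ⟨4, rfl⟩
        | exact Submodule.subset_span ⟨5, rfl⟩
  have hspan : p ∈ Submodule.span ℝ (Set.range v6) := by
    rw [p.as_sum]
    refine Submodule.sum_mem _ fun m hm => ?_
    have hdeg : m 0 + m 1 ≤ 2 := by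
      have h1 := MvPolynomial.le_totalDegree hm
      have h2 : (m.sum fun _ e => e) = m 0 + m 1 := by
        rw [Finsupp.sum_fintype _ _ (fun i => rfl), Fin.sum_univ_two]
      omega
    have hmeq : m = Finsupp.single 0 (m 0) + Finsupp.single 1 (m 1) := by
      ext i
      fin_cases i <;> simp [Finsupp.single_apply]
    have hmon : C (coeff m p) * (X 0 ^ m 0 * X 1 ^ m 1) = monomial m (coeff m p) := by
      rw [X_pow_eq_monomial, X_pow_eq_monomial, monomial_mul, C_mul_monomial, one_mul,
        mul_one, ← hmeq]
    rw [← hmon, ← smul_eq_C_mul]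
    exact Submodule.smul_mem _ _ (key _ _ hdeg)
  rw [Submodule.mem_span_range_iff_exists_fun] at hspan
  obtain ⟨c, hc⟩ := hspan
  refine ⟨c 0, c 1, c 2, c 3, c 4, c 5, ?_⟩
  rw [← hc, Fin.sum_univ_six]
  simp only [hv6, Matrix.cons_val_zero, Matrix.cons_val_one, Matrix.head_cons,
    Matrix.cons_val_two, Matrix.tail_cons, Matrix.cons_val_three, Matrix.cons_val_four,
    show (![1, X 0, X 1, X 0 ^ 2, X 0 * X 1, X 1 ^ 2] : Fin 6 → MvPolynomial (Fin 2) ℝ) 5 = X 1 ^ 2 from rfl, smul_eq_C_mul]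
  ring

lemma shape_rep (u : MvPolynomial (Fin 2) ℝ × MvPolynomial (Fin 2) ℝ)
    (hu : u ∈ shapeSpace) :
    ∃ A0 A1 A2 A3 A4 A5 B0 B1 B2 B3 B4 B5 CC : ℝ,
      u.1 = C A0 + C A1 * X 0 + C A2 * X 1 + C A3 * X 0 ^ 2 + C A4 * (X 0 * X 1)
          + C A5 * X 1 ^ 2 + C CC * (-(X 1) * bubbleFactor) ∧
      u.2 = C B0 + C B1 * X 0 + C B2 * X 1 + C B3 * X 0 ^ 2 + C B4 * (X 0 * X 1)
          + C B5 * X 1 ^ 2 + C CC * (X 0 * bubbleFactor) := by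
  rw [shapeSpace, Submodule.mem_sup] at hu
  obtain ⟨p, hp, q, hq, hpq⟩ := hu
  rw [Submodule.mem_span_singleton] at hq
  obtain ⟨cc, rfl⟩ := hq
  obtain ⟨hp1, hp2⟩ := Submodule.mem_prod.mp hp
  rw [MvPolynomial.mem_restrictTotalDegree] at hp1 hp2
  obtain ⟨a0, a1, a2, a3, a4, a5, h1⟩ := P2_rep p.1 hp1
  obtain ⟨b0, b1, b2, b3, b4, b5, h2⟩ := P2_rep p.2 hp2
  refine ⟨a0, a1, a2, a3, a4, a5, b0, b1, b2, b3, b4, b5, cc, ?_, ?_⟩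
  · rw [← hpq]
    show p.1 + cc • pB.1 = _
    rw [h1, pB]
    simp [smul_eq_C_mul]
  · rw [← hpq]
    show p.2 + cc • pB.2 = _
    rw [h2, pB]
    simp [smul_eq_C_mul]


set_option maxHeartbeats 2000000 in
/-- Unisolvence of the degrees of freedom of the lowest-order curl-curl conforming
element: `u ∈ S = [P₂]² ⊕ span{𝔭B}` vanishing on the 13 degrees of freedom
(vertex curls, edge tangential moments against `P₂`, interior moment against `x`)
must be zero. -/
theorem unisolvence_curlcurl_element
    (u : MvPolynomial (Fin 2) ℝ × MvPolynomial (Fin 2) ℝ) (hu : u ∈ shapeSpace)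
    (hv : ∀ a ∈ ({((0:ℝ), (0:ℝ)), ((1:ℝ), (0:ℝ)), ((0:ℝ), (1:ℝ))} : Set (ℝ × ℝ)),
      evalP (curlPoly u) a = 0)
    (he₁ : ∀ q : MvPolynomial (Fin 2) ℝ, q.totalDegree ≤ 2 →
      (∫ x in segment ℝ ((1:ℝ), (0:ℝ)) ((0:ℝ), (1:ℝ)),
        (evalP u.1 x * (-(Real.sqrt 2)⁻¹) + evalP u.2 x * (Real.sqrt 2)⁻¹) *
          evalP q x ∂(μH[1])) = 0)
    (he₂ : ∀ q : MvPolynomial (Fin 2) ℝ, q.totalDegree ≤ 2 →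
      (∫ x in segment ℝ ((0:ℝ), (1:ℝ)) ((0:ℝ), (0:ℝ)),
        (evalP u.1 x * 0 + evalP u.2 x * (-1)) * evalP q x ∂(μH[1])) = 0)
    (he₃ : ∀ q : MvPolynomial (Fin 2) ℝ, q.totalDegree ≤ 2 →
      (∫ x in segment ℝ ((0:ℝ), (0:ℝ)) ((1:ℝ), (0:ℝ)),
        (evalP u.1 x * 1 + evalP u.2 x * 0) * evalP q x ∂(μH[1])) = 0)
    (hK : (∫ x in closedUnitTriangle, (evalP u.1 x * x.1 + evalP u.2 x * x.2)) = 0) :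
    u = 0 := by
  obtain ⟨A0, A1, A2, A3, A4, A5, B0, B1, B2, B3, B4, B5, CC, hu1, hu2⟩ := shape_rep u hu
  have hkey : ∀ x y : ℝ, evalP (curlPoly u) (x, y) = A2 * ((-1)) + A4 * ((-1)*x) + A5 * ((-2)*y) + B1 * (1) + B3 * (2*x) + B4 * (1*y) + CC * (1*x*y + (-1)*x*y^2 + (-1)*x^2*y) := by
    intro x y
    simp [curlPoly, evalP, hu1, hu2, bubbleFactor, pderiv_mul]
    ring
  have E1 := (hkey 0 0).symm.trans (hv ((0:ℝ), (0:ℝ)) (Set.mem_insert _ _))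
  have E2 := (hkey 1 0).symm.trans (hv ((1:ℝ), (0:ℝ)) (Set.mem_insert_of_mem _ (Set.mem_insert _ _)))
  have E3 := (hkey 0 1).symm.trans (hv ((0:ℝ), (1:ℝ)) (Set.mem_insert_of_mem _ (Set.mem_insert_of_mem _ rfl)))
  have E4 := by
    have hseg := seg_int 1 0 0 1 (by norm_num) (fun x => (evalP u.1 x * (-(Real.sqrt 2)⁻¹) + evalP u.2 x * (Real.sqrt 2)⁻¹) * evalP (1 : MvPolynomial (Fin 2) ℝ) x)
    have h0 := hseg.symm.trans (he₁ (1 : MvPolynomial (Fin 2) ℝ) (by simp))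
    have hcong : (∫ t in (0:ℝ)..1, (fun x => (evalP u.1 x * (-(Real.sqrt 2)⁻¹) + evalP u.2 x * (Real.sqrt 2)⁻¹) * evalP (1 : MvPolynomial (Fin 2) ℝ) x) ((1-t)*1 + t*0, (1-t)*0 + t*1)) =
        ∫ t in (0:ℝ)..1, ((Real.sqrt 2)⁻¹ * (((-1)*A0 + (-1)*A1 + (-1)*A3 + B0 + B1 + B3) + (A1 + (-1)*A2 + 2*A3 + (-1)*A4 + (-1)*B1 + B2 + (-2)*B3 + B4 + (1/20)*CC)*t + ((-1)*A3 + A4 + (-1)*A5 + B3 + (-1)*B4 + B5 + (-1/20)*CC)*t^2 + (0:ℝ)*t^3 + (0:ℝ)*t^4 + (0:ℝ)*t^5)) := by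
      refine intervalIntegral.integral_congr fun t ht => ?_
      beta_reduce
      simp only [hu1, hu2]
      simp [evalP, bubbleFactor]
      try ring
    have h1 := hcong.symm.trans h0
    rw [intervalIntegral.integral_const_mul] at h1
    have hs : ((Real.sqrt 2)⁻¹ : ℝ) ≠ 0 := inv_ne_zero (ne_of_gt (Real.sqrt_pos.mpr (by norm_num)))
    have h2 := (mul_eq_zero.mp h1).resolve_left hs
    exact (poly_int ((-1)*A0 + (-1)*A1 + (-1)*A3 + B0 + B1 + B3) (A1 + (-1)*A2 + 2*A3 + (-1)*A4 + (-1)*B1 + B2 + (-2)*B3 + B4 + (1/20)*CC) ((-1)*A3 + A4 + (-1)*A5 + B3 + (-1)*B4 + B5 + (-1/20)*CC) (0:ℝ) (0:ℝ) (0:ℝ)).symm.trans h2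
  have E5 := by
    have hseg := seg_int 1 0 0 1 (by norm_num) (fun x => (evalP u.1 x * (-(Real.sqrt 2)⁻¹) + evalP u.2 x * (Real.sqrt 2)⁻¹) * evalP (X 1 : MvPolynomial (Fin 2) ℝ) x)
    have h0 := hseg.symm.trans (he₁ (X 1 : MvPolynomial (Fin 2) ℝ) (by simp [MvPolynomial.totalDegree_X]))
    have hcong : (∫ t in (0:ℝ)..1, (fun x => (evalP u.1 x * (-(Real.sqrt 2)⁻¹) + evalP u.2 x * (Real.sqrt 2)⁻¹) * evalP (X 1 : MvPolynomial (Fin 2) ℝ) x) ((1-t)*1 + t*0, (1-t)*0 + t*1)) =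
        ∫ t in (0:ℝ)..1, ((Real.sqrt 2)⁻¹ * ((0:ℝ) + ((-1)*A0 + (-1)*A1 + (-1)*A3 + B0 + B1 + B3)*t + (A1 + (-1)*A2 + 2*A3 + (-1)*A4 + (-1)*B1 + B2 + (-2)*B3 + B4 + (1/20)*CC)*t^2 + ((-1)*A3 + A4 + (-1)*A5 + B3 + (-1)*B4 + B5 + (-1/20)*CC)*t^3 + (0:ℝ)*t^4 + (0:ℝ)*t^5)) := by
      refine intervalIntegral.integral_congr fun t ht => ?_
      beta_reduce
      simp only [hu1, hu2]
      simp [evalP, bubbleFactor]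
      try ring
    have h1 := hcong.symm.trans h0
    rw [intervalIntegral.integral_const_mul] at h1
    have hs : ((Real.sqrt 2)⁻¹ : ℝ) ≠ 0 := inv_ne_zero (ne_of_gt (Real.sqrt_pos.mpr (by norm_num)))
    have h2 := (mul_eq_zero.mp h1).resolve_left hs
    exact (poly_int (0:ℝ) ((-1)*A0 + (-1)*A1 + (-1)*A3 + B0 + B1 + B3) (A1 + (-1)*A2 + 2*A3 + (-1)*A4 + (-1)*B1 + B2 + (-2)*B3 + B4 + (1/20)*CC) ((-1)*A3 + A4 + (-1)*A5 + B3 + (-1)*B4 + B5 + (-1/20)*CC) (0:ℝ) (0:ℝ)).symm.trans h2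
  have E6 := by
    have hseg := seg_int 1 0 0 1 (by norm_num) (fun x => (evalP u.1 x * (-(Real.sqrt 2)⁻¹) + evalP u.2 x * (Real.sqrt 2)⁻¹) * evalP (X 1 ^ 2 : MvPolynomial (Fin 2) ℝ) x)
    have h0 := hseg.symm.trans (he₁ (X 1 ^ 2 : MvPolynomial (Fin 2) ℝ) (by refine le_trans (MvPolynomial.totalDegree_pow _ _) ?_; simp [MvPolynomial.totalDegree_X]))
    have hcong : (∫ t in (0:ℝ)..1, (fun x => (evalP u.1 x * (-(Real.sqrt 2)⁻¹) + evalP u.2 x * (Real.sqrt 2)⁻¹) * evalP (X 1 ^ 2 : MvPolynomial (Fin 2) ℝ) x) ((1-t)*1 + t*0, (1-t)*0 + t*1)) =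
        ∫ t in (0:ℝ)..1, ((Real.sqrt 2)⁻¹ * ((0:ℝ) + (0:ℝ)*t + ((-1)*A0 + (-1)*A1 + (-1)*A3 + B0 + B1 + B3)*t^2 + (A1 + (-1)*A2 + 2*A3 + (-1)*A4 + (-1)*B1 + B2 + (-2)*B3 + B4 + (1/20)*CC)*t^3 + ((-1)*A3 + A4 + (-1)*A5 + B3 + (-1)*B4 + B5 + (-1/20)*CC)*t^4 + (0:ℝ)*t^5)) := by
      refine intervalIntegral.integral_congr fun t ht => ?_
      beta_reduce
      simp only [hu1, hu2]
      simp [evalP, bubbleFactor]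
      try ring
    have h1 := hcong.symm.trans h0
    rw [intervalIntegral.integral_const_mul] at h1
    have hs : ((Real.sqrt 2)⁻¹ : ℝ) ≠ 0 := inv_ne_zero (ne_of_gt (Real.sqrt_pos.mpr (by norm_num)))
    have h2 := (mul_eq_zero.mp h1).resolve_left hs
    exact (poly_int (0:ℝ) (0:ℝ) ((-1)*A0 + (-1)*A1 + (-1)*A3 + B0 + B1 + B3) (A1 + (-1)*A2 + 2*A3 + (-1)*A4 + (-1)*B1 + B2 + (-2)*B3 + B4 + (1/20)*CC) ((-1)*A3 + A4 + (-1)*A5 + B3 + (-1)*B4 + B5 + (-1/20)*CC) (0:ℝ)).symm.trans h2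
  have E7 := by
    have hseg := seg_int 0 1 0 0 (by norm_num) (fun x => (evalP u.1 x * 0 + evalP u.2 x * (-1)) * evalP (1 : MvPolynomial (Fin 2) ℝ) x)
    have h0 := hseg.symm.trans (he₂ (1 : MvPolynomial (Fin 2) ℝ) (by simp))
    have hcong : (∫ t in (0:ℝ)..1, (fun x => (evalP u.1 x * 0 + evalP u.2 x * (-1)) * evalP (1 : MvPolynomial (Fin 2) ℝ) x) ((1-t)*0 + t*0, (1-t)*1 + t*0)) =
        ∫ t in (0:ℝ)..1, (((-1)*B0 + (-1)*B2 + (-1)*B5) + (B2 + 2*B5)*t + ((-1)*B5)*t^2 + (0:ℝ)*t^3 + (0:ℝ)*t^4 + (0:ℝ)*t^5) := by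
      refine intervalIntegral.integral_congr fun t ht => ?_
      beta_reduce
      simp only [hu1, hu2]
      simp [evalP, bubbleFactor]
      try ring
    have h1 := hcong.symm.trans h0
    exact (poly_int ((-1)*B0 + (-1)*B2 + (-1)*B5) (B2 + 2*B5) ((-1)*B5) (0:ℝ) (0:ℝ) (0:ℝ)).symm.trans h1
  have E8 := by
    have hseg := seg_int 0 1 0 0 (by norm_num) (fun x => (evalP u.1 x * 0 + evalP u.2 x * (-1)) * evalP (X 1 : MvPolynomial (Fin 2) ℝ) x)
    have h0 := hseg.symm.trans (he₂ (X 1 : MvPolynomial (Fin 2) ℝ) (by simp [MvPolynomial.totalDegree_X]))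
    have hcong : (∫ t in (0:ℝ)..1, (fun x => (evalP u.1 x * 0 + evalP u.2 x * (-1)) * evalP (X 1 : MvPolynomial (Fin 2) ℝ) x) ((1-t)*0 + t*0, (1-t)*1 + t*0)) =
        ∫ t in (0:ℝ)..1, (((-1)*B0 + (-1)*B2 + (-1)*B5) + (B0 + 2*B2 + 3*B5)*t + ((-1)*B2 + (-3)*B5)*t^2 + (B5)*t^3 + (0:ℝ)*t^4 + (0:ℝ)*t^5) := by
      refine intervalIntegral.integral_congr fun t ht => ?_
      beta_reduce
      simp only [hu1, hu2]
      simp [evalP, bubbleFactor]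
      try ring
    have h1 := hcong.symm.trans h0
    exact (poly_int ((-1)*B0 + (-1)*B2 + (-1)*B5) (B0 + 2*B2 + 3*B5) ((-1)*B2 + (-3)*B5) (B5) (0:ℝ) (0:ℝ)).symm.trans h1
  have E9 := by
    have hseg := seg_int 0 1 0 0 (by norm_num) (fun x => (evalP u.1 x * 0 + evalP u.2 x * (-1)) * evalP (X 1 ^ 2 : MvPolynomial (Fin 2) ℝ) x)
    have h0 := hseg.symm.trans (he₂ (X 1 ^ 2 : MvPolynomial (Fin 2) ℝ) (by refine le_trans (MvPolynomial.totalDegree_pow _ _) ?_; simp [MvPolynomial.totalDegree_X]))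
    have hcong : (∫ t in (0:ℝ)..1, (fun x => (evalP u.1 x * 0 + evalP u.2 x * (-1)) * evalP (X 1 ^ 2 : MvPolynomial (Fin 2) ℝ) x) ((1-t)*0 + t*0, (1-t)*1 + t*0)) =
        ∫ t in (0:ℝ)..1, (((-1)*B0 + (-1)*B2 + (-1)*B5) + (2*B0 + 3*B2 + 4*B5)*t + ((-1)*B0 + (-3)*B2 + (-6)*B5)*t^2 + (B2 + 4*B5)*t^3 + ((-1)*B5)*t^4 + (0:ℝ)*t^5) := by
      refine intervalIntegral.integral_congr fun t ht => ?_
      beta_reduce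
      simp only [hu1, hu2]
      simp [evalP, bubbleFactor]
      try ring
    have h1 := hcong.symm.trans h0
    exact (poly_int ((-1)*B0 + (-1)*B2 + (-1)*B5) (2*B0 + 3*B2 + 4*B5) ((-1)*B0 + (-3)*B2 + (-6)*B5) (B2 + 4*B5) ((-1)*B5) (0:ℝ)).symm.trans h1
  have E10 := by
    have hseg := seg_int 0 0 1 0 (by norm_num) (fun x => (evalP u.1 x * 1 + evalP u.2 x * 0) * evalP (1 : MvPolynomial (Fin 2) ℝ) x)
    have h0 := hseg.symm.trans (he₃ (1 : MvPolynomial (Fin 2) ℝ) (by simp))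
    have hcong : (∫ t in (0:ℝ)..1, (fun x => (evalP u.1 x * 1 + evalP u.2 x * 0) * evalP (1 : MvPolynomial (Fin 2) ℝ) x) ((1-t)*0 + t*1, (1-t)*0 + t*0)) =
        ∫ t in (0:ℝ)..1, ((A0) + (A1)*t + (A3)*t^2 + (0:ℝ)*t^3 + (0:ℝ)*t^4 + (0:ℝ)*t^5) := by
      refine intervalIntegral.integral_congr fun t ht => ?_
      beta_reduce
      simp only [hu1, hu2]
      simp [evalP, bubbleFactor]
      try ring
    have h1 := hcong.symm.trans h0
    exact (poly_int (A0) (A1) (A3) (0:ℝ) (0:ℝ) (0:ℝ)).symm.trans h1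
  have E11 := by
    have hseg := seg_int 0 0 1 0 (by norm_num) (fun x => (evalP u.1 x * 1 + evalP u.2 x * 0) * evalP (X 0 : MvPolynomial (Fin 2) ℝ) x)
    have h0 := hseg.symm.trans (he₃ (X 0 : MvPolynomial (Fin 2) ℝ) (by simp [MvPolynomial.totalDegree_X]))
    have hcong : (∫ t in (0:ℝ)..1, (fun x => (evalP u.1 x * 1 + evalP u.2 x * 0) * evalP (X 0 : MvPolynomial (Fin 2) ℝ) x) ((1-t)*0 + t*1, (1-t)*0 + t*0)) =
        ∫ t in (0:ℝ)..1, ((0:ℝ) + (A0)*t + (A1)*t^2 + (A3)*t^3 + (0:ℝ)*t^4 + (0:ℝ)*t^5) := by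
      refine intervalIntegral.integral_congr fun t ht => ?_
      beta_reduce
      simp only [hu1, hu2]
      simp [evalP, bubbleFactor]
      try ring
    have h1 := hcong.symm.trans h0
    exact (poly_int (0:ℝ) (A0) (A1) (A3) (0:ℝ) (0:ℝ)).symm.trans h1
  have E12 := by
    have hseg := seg_int 0 0 1 0 (by norm_num) (fun x => (evalP u.1 x * 1 + evalP u.2 x * 0) * evalP (X 0 ^ 2 : MvPolynomial (Fin 2) ℝ) x)
    have h0 := hseg.symm.trans (he₃ (X 0 ^ 2 : MvPolynomial (Fin 2) ℝ) (by refine le_trans (MvPolynomial.totalDegree_pow _ _) ?_; simp [MvPolynomial.totalDegree_X]))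
    have hcong : (∫ t in (0:ℝ)..1, (fun x => (evalP u.1 x * 1 + evalP u.2 x * 0) * evalP (X 0 ^ 2 : MvPolynomial (Fin 2) ℝ) x) ((1-t)*0 + t*1, (1-t)*0 + t*0)) =
        ∫ t in (0:ℝ)..1, ((0:ℝ) + (0:ℝ)*t + (A0)*t^2 + (A1)*t^3 + (A3)*t^4 + (0:ℝ)*t^5) := by
      refine intervalIntegral.integral_congr fun t ht => ?_
      beta_reduce
      simp only [hu1, hu2]
      simp [evalP, bubbleFactor]
      try ring
    have h1 := hcong.symm.trans h0
    exact (poly_int (0:ℝ) (0:ℝ) (A0) (A1) (A3) (0:ℝ)).symm.trans h1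
  have E13 := by
    have h0 := (triangle_int (fun x => evalP u.1 x * x.1 + evalP u.2 x * x.2) (by fun_prop)).symm.trans hK
    have hcong : (∫ x in (0:ℝ)..1, ∫ y in (0:ℝ)..(1-x), (fun x => evalP u.1 x * x.1 + evalP u.2 x * x.2) (x, y)) =
        ∫ x in (0:ℝ)..1, (((1/2)*B0 + (1/3)*B2 + (1/4)*B5) + (A0 + (1/2)*A2 + (1/3)*A5 + (-1)*B0 + (1/2)*B1 + (-1)*B2 + (1/3)*B4 + (-1)*B5)*x + ((-1)*A0 + A1 + (-1)*A2 + (1/2)*A4 + (-1)*A5 + (1/2)*B0 + (-1)*B1 + B2 + (1/2)*B3 + (-1)*B4 + (3/2)*B5)*x^2 + ((-1)*A1 + (1/2)*A2 + A3 + (-1)*A4 + A5 + (1/2)*B1 + (-1/3)*B2 + (-1)*B3 + B4 + (-1)*B5)*x^3 + ((-1)*A3 + (1/2)*A4 + (-1/3)*A5 + (1/2)*B3 + (-1/3)*B4 + (1/4)*B5)*x^4 + (0:ℝ)*x^5) := by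
      refine intervalIntegral.integral_congr fun x hx => ?_
      beta_reduce
      have hinner : (∫ y in (0:ℝ)..(1-x), (fun x => evalP u.1 x * x.1 + evalP u.2 x * x.2) (x, y)) =
          ∫ y in (0:ℝ)..(1-x), (((0:ℝ) + (A0)*x + (A1)*x^2 + (A3)*x^3 + (0:ℝ)*x^4) + ((B0) + (A2 + B1)*x + (A4 + B3)*x^2 + (0:ℝ)*x^3 + (0:ℝ)*x^4)*y + ((B2) + (A5 + B4)*x + (0:ℝ)*x^2 + (0:ℝ)*x^3 + (0:ℝ)*x^4)*y^2 + ((B5) + (0:ℝ)*x + (0:ℝ)*x^2 + (0:ℝ)*x^3 + (0:ℝ)*x^4)*y^3 + ((0:ℝ) + (0:ℝ)*x + (0:ℝ)*x^2 + (0:ℝ)*x^3 + (0:ℝ)*x^4)*y^4) := by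
        refine intervalIntegral.integral_congr fun y hy => ?_
        beta_reduce
        simp only [hu1, hu2]
        simp [evalP, bubbleFactor]
        ring
      rw [hinner, poly_int_ub]
      ring
    exact (poly_int ((1/2)*B0 + (1/3)*B2 + (1/4)*B5) (A0 + (1/2)*A2 + (1/3)*A5 + (-1)*B0 + (1/2)*B1 + (-1)*B2 + (1/3)*B4 + (-1)*B5) ((-1)*A0 + A1 + (-1)*A2 + (1/2)*A4 + (-1)*A5 + (1/2)*B0 + (-1)*B1 + B2 + (1/2)*B3 + (-1)*B4 + (3/2)*B5) ((-1)*A1 + (1/2)*A2 + A3 + (-1)*A4 + A5 + (1/2)*B1 + (-1/3)*B2 + (-1)*B3 + B4 + (-1)*B5) ((-1)*A3 + (1/2)*A4 + (-1/3)*A5 + (1/2)*B3 + (-1/3)*B4 + (1/4)*B5) (0:ℝ)).symm.trans (hcong.symm.trans h0)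
  have hA0 : A0 = 0 := by linear_combination ((9:ℝ)) * E10 + ((-36:ℝ)) * E11 + ((30:ℝ)) * E12
  have hA1 : A1 = 0 := by linear_combination ((-36:ℝ)) * E10 + ((192:ℝ)) * E11 + ((-180:ℝ)) * E12
  have hA2 : A2 = 0 := by linear_combination ((-1/2:ℝ)) * E1 + ((-1:ℝ)) * E2 + ((1:ℝ)) * E3 + ((18:ℝ)) * E4 + ((-36:ℝ)) * E5 + ((18:ℝ)) * E7 + ((-96:ℝ)) * E8 + ((60:ℝ)) * E9 + ((-18:ℝ)) * E10 + ((96:ℝ)) * E11 + ((-60:ℝ)) * E12 + ((-60:ℝ)) * E13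
  have hA3 : A3 = 0 := by linear_combination ((30:ℝ)) * E10 + ((-180:ℝ)) * E11 + ((180:ℝ)) * E12
  have hA4 : A4 = 0 := by linear_combination ((1:ℝ)) * E2 + ((-2:ℝ)) * E3 + ((-18:ℝ)) * E4 + ((60:ℝ)) * E6 + ((-18:ℝ)) * E7 + ((120:ℝ)) * E8 + ((-60:ℝ)) * E9 + ((42:ℝ)) * E10 + ((-240:ℝ)) * E11 + ((180:ℝ)) * E12 + ((120:ℝ)) * E13
  have hA5 : A5 = 0 := by linear_combination ((1/2:ℝ)) * E1 + ((1:ℝ)) * E2 + ((-1:ℝ)) * E3 + ((-21:ℝ)) * E4 + ((60:ℝ)) * E5 + ((-30:ℝ)) * E6 + ((-21:ℝ)) * E7 + ((120:ℝ)) * E8 + ((-90:ℝ)) * E9 + ((9:ℝ)) * E10 + ((-60:ℝ)) * E11 + ((30:ℝ)) * E12 + ((60:ℝ)) * E13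
  have hB0 : B0 = 0 := by linear_combination ((-9:ℝ)) * E7 + ((36:ℝ)) * E8 + ((-30:ℝ)) * E9
  have hB1 : B1 = 0 := by linear_combination ((1/2:ℝ)) * E1 + ((-1:ℝ)) * E2 + ((1:ℝ)) * E3 + ((18:ℝ)) * E4 + ((-36:ℝ)) * E5 + ((18:ℝ)) * E7 + ((-96:ℝ)) * E8 + ((60:ℝ)) * E9 + ((-18:ℝ)) * E10 + ((96:ℝ)) * E11 + ((-60:ℝ)) * E12 + ((-60:ℝ)) * E13
  have hB2 : B2 = 0 := by linear_combination ((36:ℝ)) * E7 + ((-192:ℝ)) * E8 + ((180:ℝ)) * E9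
  have hB3 : B3 = 0 := by linear_combination ((-1/2:ℝ)) * E1 + ((1:ℝ)) * E2 + ((-1:ℝ)) * E3 + ((-9:ℝ)) * E4 + ((30:ℝ)) * E6 + ((-9:ℝ)) * E7 + ((60:ℝ)) * E8 + ((-30:ℝ)) * E9 + ((21:ℝ)) * E10 + ((-120:ℝ)) * E11 + ((90:ℝ)) * E12 + ((60:ℝ)) * E13
  have hB4 : B4 = 0 := by linear_combination ((2:ℝ)) * E2 + ((-1:ℝ)) * E3 + ((-42:ℝ)) * E4 + ((120:ℝ)) * E5 + ((-60:ℝ)) * E6 + ((-42:ℝ)) * E7 + ((240:ℝ)) * E8 + ((-180:ℝ)) * E9 + ((18:ℝ)) * E10 + ((-120:ℝ)) * E11 + ((60:ℝ)) * E12 + ((120:ℝ)) * E13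
  have hB5 : B5 = 0 := by linear_combination ((-30:ℝ)) * E7 + ((180:ℝ)) * E8 + ((-180:ℝ)) * E9
  have hCC : CC = 0 := by linear_combination ((-20:ℝ)) * E1 + ((-20:ℝ)) * E2 + ((-20:ℝ)) * E3 + ((120:ℝ)) * E4 + ((120:ℝ)) * E7 + ((120:ℝ)) * E10
  have h1 : u.1 = 0 := by
    rw [hu1, hA0, hA1, hA2, hA3, hA4, hA5, hCC]; simp
  have h2 : u.2 = 0 := by
    rw [hu2, hB0, hB1, hB2, hB3, hB4, hB5, hCC]; simp
  rw [Prod.ext_iff]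
  exact ⟨h1, h2⟩
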